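/- arXiv:2112.03696 — 2 statements merged into one kernel-verified Lean document; each statement's English description precedes it below -/
import Mathlib

section
/- (Proposition 4, Gamma case.) Let y₁, y₂ be nonzero real numbers with y₁ ≠ y₂, let k ≠ 0, and let l₁, l₂ be real numbers with (k - 1) - y₁ l₁ ≠ 0 and (k - 1) - y₂ l₂ ≠ 0. If the denoised estimates agree, i.e. k y₁ / ( (k-1) - y₁ l₁ ) = k y₂ / ( (k-1) - y₂ l₂ ), then k = 1 + ( l₂ - l₁ ) / ( 1/y₂ - 1/y₁ ). -/
/-- Proposition 4, Gamma case: if the Gamma Tweedie denoised estimates of `y₁` and `y₂` agree,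
i.e. `k y₁/((k-1) - y₁ l₁) = k y₂/((k-1) - y₂ l₂)`, then
`k = 1 + (l₂ - l₁)/(1/y₂ - 1/y₁)`. -/
theorem gamma_noise_level_estimation (y₁ y₂ k l₁ l₂ : ℝ)
    (hy₁ : y₁ ≠ 0) (hy₂ : y₂ ≠ 0) (hne : y₁ ≠ y₂) (hk : k ≠ 0)
    (hd₁ : (k - 1) - y₁ * l₁ ≠ 0) (hd₂ : (k - 1) - y₂ * l₂ ≠ 0)
    (heq : k * y₁ / ((k - 1) - y₁ * l₁) = k * y₂ / ((k - 1) - y₂ * l₂)) :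
    k = 1 + (l₂ - l₁) / (1 / y₂ - 1 / y₁) := by
  have hsub : y₁ - y₂ ≠ 0 := sub_ne_zero.mpr hne
  rw [div_eq_div_iff hd₁ hd₂] at heq
  have key : (k - 1) * (y₁ - y₂) = y₁ * y₂ * (l₂ - l₁) :=
    mul_left_cancel₀ hk (by ring_nf; ring_nf at heq; linarith)
  field_simp
  ring_nf
  ring_nf at key
  linarith
end

section
/- (Tweedie's formula, Gaussian case with prior.) Let σ > 0 and let π be a finite Borel measure on ℝ (the prior on the clean value μ). Define the Gaussian kernel g(y, μ) = (2π σ²)^(-1/2) exp( -(y - μ)² / (2σ²) ) and the marginal density p(y) = ∫ g(y, μ) dπ(μ). Fix y₀ ∈ ℝ and assume: (i) p(y₀) > 0; (ii) the functions μ ↦ g(y₀, μ) and μ ↦ |μ| g(y₀, μ) are π-integrable; (iii) there exist δ > 0 and a π-integrable function G such that |∂g(y, μ)/∂y| ≤ G(μ) for all y with |y - y₀| < δ and all μ. Then p is differentiable at y₀, and the posterior mean E[μ | y₀] = ( ∫ μ g(y₀, μ) dπ(μ) ) / p(y₀) satisfies E[μ | y₀] = y₀ + σ² * ( p'(y₀)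 / p(y₀) ), i.e. the denoised estimate equals y₀ + σ² l'(y₀) where l'(y₀) = d/dy log p(y) at y₀. -/
/-!
Differentiating the Gaussian kernel in `y` gives `∂_y g(y, μ) = (μ - y) / σ² · g(y, μ)`.
Under the domination hypothesis this may be integrated against the prior, so
`p'(y₀) = (∫ μ g(y₀, μ) dπ - y₀ p(y₀)) / σ²`; dividing by `p(y₀)` and solving for the
posterior mean gives Tweedie's formula.
-/

open MeasureTheory

noncomputable def gaussianKernel (σ y μ : ℝ) : ℝ :=
  (2 * Real.pi * σ ^ 2) ^ (-(1 / 2) : ℝ) * Real.exp (-(y - μ) ^ 2 / (2 * σ ^ 2))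

lemma gaussianKernel_nonneg (σ y μ : ℝ) : 0 ≤ gaussianKernel σ y μ := by
  unfold gaussianKernel; positivity

lemma continuous_gaussianKernel (σ y : ℝ) : Continuous (gaussianKernel σ y) := by
  unfold gaussianKernel; fun_prop

lemma hasDerivAt_gaussianKernel (σ y μ : ℝ) :
    HasDerivAt (fun y => gaussianKernel σ y μ) ((μ - y) / σ ^ 2 * gaussianKernel σ y μ) y := by
  have hsq : HasDerivAt (fun y : ℝ => -(y - μ) ^ 2 / (2 * σ ^ 2)) ((μ - y) / σ ^ 2) y := by
    have := ((((hasDerivAt_id y).sub_const μ).fun_pow 2).fun_neg).div_const (2 * σ ^ 2)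
    refine this.congr_deriv ?_
    simp only [id, Nat.cast_ofNat]
    rw [show -(2 * (y - μ) ^ (2 - 1) * 1) = 2 * (μ - y) by ring, mul_div_mul_left _ _ two_ne_zero]
  unfold gaussianKernel
  refine (hsq.exp.const_mul _).congr_deriv ?_
  ring

lemma hasDerivAt_integral_of_abs_deriv_le {α : Type*} [MeasurableSpace α] {pr : Measure α}
    {F F' : ℝ → α → ℝ} {G : α → ℝ}
    {y₀ δ : ℝ} (hδ : 0 < δ) (hF_meas : ∀ y, AEStronglyMeasurable (F y) pr)
    (hF_int : Integrable (F y₀) pr) (hF'_meas : AEStronglyMeasurable (F' y₀) pr)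
    (hF' : ∀ y μ, HasDerivAt (fun y => F y μ) (F' y μ) y) (hG : Integrable G pr)
    (hbound : ∀ y μ, |y - y₀| < δ → |deriv (fun y => F y μ) y| ≤ G μ) :
    HasDerivAt (fun y => ∫ μ, F y μ ∂pr) (∫ μ, F' y₀ μ ∂pr) y₀ := by
  refine (hasDerivAt_integral_of_dominated_loc_of_deriv_le (Metric.ball_mem_nhds y₀ hδ)
    (.of_forall hF_meas) hF_int hF'_meas (.of_forall fun μ y hy => ?_) hG
    (.of_forall fun μ y _ => hF' y μ)).2
  rw [Real.norm_eq_abs, ← (hF' y μ).deriv]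
  exact hbound y μ (by simpa [Real.dist_eq] using hy)

lemma MeasureTheory.Integrable.id_mul_of_abs_mul {pr : Measure ℝ} {k : ℝ → ℝ} (hk : Continuous k)
    (hk_nonneg : ∀ μ, 0 ≤ k μ) (h : Integrable (fun μ => |μ| * k μ) pr) :
    Integrable (fun μ => μ * k μ) pr := by
  refine h.mono' (continuous_id.mul hk).aestronglyMeasurable (.of_forall fun μ => ?_)
  rw [Real.norm_eq_abs, abs_mul, abs_of_nonneg (hk_nonneg μ)]

lemma integral_id_mul_div_integral_eq {pr : Measure ℝ} {k : ℝ → ℝ} {s : ℝ} (y₀ : ℝ)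
    (hs : s ≠ 0) (hk : Integrable k pr) (hk₁ : Integrable (fun μ => μ * k μ) pr)
    (hk_ne : ∫ μ, k μ ∂pr ≠ 0) :
    (∫ μ, μ * k μ ∂pr) / ∫ μ, k μ ∂pr
      = y₀ + s * ((∫ μ, (μ - y₀) / s * k μ ∂pr) / ∫ μ, k μ ∂pr) := by
  have hsplit : ∫ μ, (μ - y₀) / s * k μ ∂pr = s⁻¹ * ((∫ μ, μ * k μ ∂pr) - y₀ * ∫ μ, k μ ∂pr) := by
    simp_rw [div_eq_inv_mul, mul_assoc, sub_mul]
    rw [integral_const_mul, integral_sub hk₁ (hk.const_mul y₀), integral_const_mul]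
  rw [hsplit]
  field_simp
  ring

theorem tweedie_formula_gaussian_with_prior_general
    (σ : ℝ) (hσ : 0 < σ) (pr : Measure ℝ)
    (g : ℝ → ℝ → ℝ)
    (hg : g = fun y μ =>
      (2 * Real.pi * σ ^ 2) ^ (-(1 / 2) : ℝ) * Real.exp (-(y - μ) ^ 2 / (2 * σ ^ 2)))
    (p : ℝ → ℝ) (hp : p = fun y => ∫ μ, g y μ ∂pr)
    (y₀ : ℝ) (hpos : 0 < p y₀)
    (hint₁ : Integrable (fun μ => g y₀ μ) pr)
    (hint₂ : Integrable (fun μ => |μ| * g y₀ μ) pr)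
    (δ : ℝ) (hδ : 0 < δ) (G : ℝ → ℝ) (hG : Integrable G pr)
    (hbound : ∀ y μ : ℝ, |y - y₀| < δ → |deriv (fun y => g y μ) y| ≤ G μ) :
    DifferentiableAt ℝ p y₀ ∧
      (∫ μ, μ * g y₀ μ ∂pr) / p y₀ = y₀ + σ ^ 2 * (deriv p y₀ / p y₀) := by
  obtain rfl : g = gaussianKernel σ := hg
  subst hp
  have hp_deriv : HasDerivAt (fun y => ∫ μ, gaussianKernel σ y μ ∂pr)
      (∫ μ, (μ - y₀) / σ ^ 2 * gaussianKernel σ y₀ μ ∂pr) y₀ :=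
    hasDerivAt_integral_of_abs_deriv_le hδ
      (fun y => (continuous_gaussianKernel σ y).aestronglyMeasurable) hint₁
      ((continuous_id.sub continuous_const).div_const _ |>.mul
        (continuous_gaussianKernel σ y₀)).aestronglyMeasurable
      (fun y μ => hasDerivAt_gaussianKernel σ y μ) hG hbound
  refine ⟨hp_deriv.differentiableAt, ?_⟩
  rw [hp_deriv.deriv]
  exact integral_id_mul_div_integral_eq y₀ (by positivity) hint₁
    (hint₂.id_mul_of_abs_mul (continuous_gaussianKernel σ y₀) (gaussianKernel_nonneg σ y₀))
    hpos.ne'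

/-- Tweedie's formula, Gaussian case with prior: let `pr` be a finite Borel prior measure on
`ℝ`, let `g y μ = (2πσ²)^(-1/2) exp(-(y-μ)²/(2σ²))` be the Gaussian kernel and
`p y = ∫ g y μ dpr(μ)` the marginal density. If at `y₀` we have `p y₀ > 0`, the functions
`μ ↦ g y₀ μ` and `μ ↦ |μ| g y₀ μ` are `pr`-integrable, and `|∂g(y,μ)/∂y| ≤ G μ` for some
`pr`-integrable `G` and all `y` with `|y - y₀| < δ` (for some `δ > 0`), then `p` is
differentiable at `y₀` and the posterior mean satisfies
`E[μ|y₀] = (∫ μ g(y₀,μ) dpr(μ)) / p y₀ = y₀ + σ² (p'(y₀)/p(y₀))`. -/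
theorem tweedie_formula_gaussian_with_prior
    (σ : ℝ) (hσ : 0 < σ) (pr : Measure ℝ) [IsFiniteMeasure pr]
    (g : ℝ → ℝ → ℝ)
    (hg : g = fun y μ =>
      (2 * Real.pi * σ ^ 2) ^ (-(1 / 2) : ℝ) * Real.exp (-(y - μ) ^ 2 / (2 * σ ^ 2)))
    (p : ℝ → ℝ) (hp : p = fun y => ∫ μ, g y μ ∂pr)
    (y₀ : ℝ) (hpos : 0 < p y₀)
    (hint₁ : Integrable (fun μ => g y₀ μ) pr)
    (hint₂ : Integrable (fun μ => |μ| * g y₀ μ) pr)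
    (δ : ℝ) (hδ : 0 < δ) (G : ℝ → ℝ) (hG : Integrable G pr)
    (hbound : ∀ y μ : ℝ, |y - y₀| < δ → |deriv (fun y => g y μ) y| ≤ G μ) :
    DifferentiableAt ℝ p y₀ ∧
      (∫ μ, μ * g y₀ μ ∂pr) / p y₀ = y₀ + σ ^ 2 * (deriv p y₀ / p y₀) :=
  tweedie_formula_gaussian_with_prior_general σ hσ pr g hg p hp y₀ hpos hint₁ hint₂ δ hδ G hG hbound
end
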